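/- Let f ∈ Homeo₀(𝕋^d) with lift F, let K ⊆ 𝕋^d be a compact f-invariant set, let V ⊆ ℝ^d be a linear subspace with ρ_K(F) ⊆ v₀ + V^⊥ for some v₀ ∈ V, and let z ∈ K. (b) If sup_{n∈ℕ} ‖D_V(n,z)‖ = ∞, then 𝒜_V(z) is non-empty. (c) If sup_{n∈ℕ} D_v(n,z) = ∞ for some v ∈ V with ‖v‖ = 1, then the closure of S^+(v) intersects 𝒜_V(z). -/

import Mathlib

/-!
The normalised deviations `D_V(n,z)/‖D_V(n,z)‖` lie on the unit sphere, which is compact, so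
along times with `‖D_V(n,z)‖ → ∞` they accumulate at some point of `𝒜_V(z)`. For (c), `v ∈ V`
gives `D_v(n,z) = ⟨D_V(n,z), v⟩ ≤ ‖D_V(n,z)‖`, so times with large `D_v(n,z)` have large
`‖D_V(n,z)‖` and normalised deviation in `S^+(v)`; the accumulation point then lies in its closure.
-/

open Filter Topology Set
open scoped RealInnerProductSpace

noncomputable section

abbrev E (d : ℕ) : Type := EuclideanSpace ℝ (Fin d)

/-- The integer lattice `ℤ^d` inside `ℝ^d`. -/
def intLattice (d : ℕ) : AddSubgroup (E d) where
  carrier := {x : E d | ∀ i, ∃ m : ℤ, x i = (m : ℝ)}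
  zero_mem' := fun i => ⟨0, by simp⟩
  add_mem' := by
    intro a b ha hb i
    obtain ⟨m, hm⟩ := ha i
    obtain ⟨n, hn⟩ := hb i
    refine ⟨m + n, ?_⟩
    have h : (a + b) i = a i + b i := rfl
    rw [h, hm, hn]; push_cast; ring
  neg_mem' := by
    intro a ha i
    obtain ⟨m, hm⟩ := ha i
    refine ⟨-m, ?_⟩
    have h : (-a) i = -(a i) := rfl
    rw [h, hm]; push_cast; ring

/-- The torus `𝕋^d = ℝ^d / ℤ^d`. -/
abbrev Torus (d : ℕ) : Type := E d ⧸ intLattice d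

/-- The canonical projection `π : ℝ^d → 𝕋^d`. -/
def Tproj (d : ℕ) : E d → Torus d := QuotientAddGroup.mk

/-- `F` is a lift of `f`; together with `F` being a homeomorphism this encodes
`f ∈ Homeo₀(𝕋^d)` with lift `F`. -/
def IsLiftOf {d : ℕ} (F : E d ≃ₜ E d) (f : Torus d → Torus d) : Prop :=
  (∀ z : E d, Tproj d (F z) = f (Tproj d z)) ∧
  (∀ z : E d, ∀ m ∈ intLattice d, F (z + m) = F z + m)

/-- The rotation set of `f` on `A ⊆ 𝕋^d`. -/
def rotSetOn {d : ℕ} (F : E d ≃ₜ E d) (A : Set (Torus d)) : Set (E d) :=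
  {ρ | ∃ (n : ℕ → ℕ) (z : ℕ → E d), StrictMono n ∧ (∀ i, Tproj d (z i) ∈ A) ∧
      Tendsto (fun i => (n i : ℝ)⁻¹ • ((F : E d → E d)^[n i] (z i) - z i)) atTop (𝓝 ρ)}

/-- The rotation set `ρ(F)`. -/
def rotSet {d : ℕ} (F : E d ≃ₜ E d) : Set (E d) := rotSetOn F Set.univ

/-- The deviation from the constant rotation, `D(n,z) = F^n(z) - z - nρ`. -/
def dev {d : ℕ} (F : E d ≃ₜ E d) (ρ : E d) (n : ℕ) (z : E d) : E d :=
  (F : E d → E d)^[n] z - z - (n : ℝ) • ρ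

/-- The deviation parallel to `v`, `D_v(n,z) = ⟨F^n(z) - z - nρ, v⟩`. -/
def devIn {d : ℕ} (F : E d ≃ₜ E d) (ρ : E d) (v : E d) (n : ℕ) (z : E d) : ℝ :=
  ⟪dev F ρ n z, v⟫

/-- `1, ρ_1, …, ρ_d` are linearly independent over `ℚ`. -/
def TotallyIrrational {d : ℕ} (ρ : E d) : Prop :=
  ∀ (k : Fin d → ℤ) (m : ℤ), (∑ i, (k i : ℝ) * ρ i) = (m : ℝ) → ∀ i, k i = 0

/-- `f` has bounded mean motion (w.r.t. the rotation vector `ρ`). -/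
def BoundedMeanMotion {d : ℕ} (F : E d ≃ₜ E d) (ρ : E d) : Prop :=
  ∃ C : ℝ, ∀ (n : ℕ) (z : E d), ‖dev F ρ n z‖ ≤ C

/-- `f` is non-wandering: no nonempty open set is wandering. -/
def NonWandering {d : ℕ} (f : Torus d → Torus d) : Prop :=
  ∀ U : Set (Torus d), IsOpen U → U.Nonempty → ∃ n : ℕ, 0 < n ∧ (U ∩ f^[n] '' U).Nonempty

/-- Projection of the deviation vector to the linear subspace `V`. -/
def devProj {d : ℕ} (F : E d ≃ₜ E d) (V : Submodule ℝ (E d)) (ρ : E d) (n : ℕ) (z : E d) : E d :=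
  (Submodule.orthogonalProjectionOnto V (dev F ρ n z) : E d)

/-- The set of asymptotic directions `𝒜_V(z)`. -/
def asympDirs {d : ℕ} (F : E d ≃ₜ E d) (V : Submodule ℝ (E d)) (ρ : E d) (z : E d) :
    Set (E d) :=
  {v | ‖v‖ = 1 ∧ ∀ ε > (0 : ℝ), ∀ r > (0 : ℝ), ∃ n : ℕ,
      r < ‖devProj F V ρ n z‖ ∧ ‖(‖devProj F V ρ n z‖)⁻¹ • devProj F V ρ n z - v‖ < ε}

/-- `S^+(v) = {w ∈ 𝕊^{d-1} : ⟨v,w⟩ > 0}`. -/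
def Splus {d : ℕ} (v : E d) : Set (E d) := {w | ‖w‖ = 1 ∧ 0 < ⟪v, w⟫}

/-- `z` is `ε`-Lyapunov stable for `h`. -/
def LyapStable {X : Type*} [PseudoMetricSpace X] (h : X → X) (ε : ℝ) (z : X) : Prop :=
  ∃ δ > (0 : ℝ), ∀ n : ℕ, ∀ w, dist z w < δ → dist (h^[n] z) (h^[n] w) < ε

/-- `ε_f`, the largest `ε` such that `ε`-close points have `1/2`-close images. -/
def epsF {d : ℕ} (f : Torus d → Torus d) : ℝ :=
  sSup {ε : ℝ | 0 < ε ∧ ∀ z z' : Torus d, dist z z' < ε → dist (f z) (f z') < 1 / 2}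

/-- `ℤ`-indexed iterates of a homeomorphism. -/
def iterZ {d : ℕ} (F : E d ≃ₜ E d) : ℤ → E d → E d
  | .ofNat n => (F : E d → E d)^[n]
  | .negSucc n => (F.symm : E d → E d)^[n + 1]

/-- `ℤ`-indexed deviations parallel to `v`. -/
def devZIn {d : ℕ} (F : E d ≃ₜ E d) (ρ v : E d) (n : ℤ) (z : E d) : ℝ :=
  ⟪iterZ F n z - z - (n : ℝ) • ρ, v⟫

section AsymptoticDirection

variable {X : Type*} [NormedAddCommGroup X] [NormedSpace ℝ X] [ProperSpace X]

theorem exists_mem_closure_asymptotic_direction (x : ℕ → X) (S : Set X)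
    (h : ∀ C : ℝ, ∃ n, C < ‖x n‖ ∧ ‖x n‖⁻¹ • x n ∈ S) :
    ∃ w ∈ closure S, ‖w‖ = 1 ∧ ∀ ε > (0 : ℝ), ∀ r > (0 : ℝ), ∃ n : ℕ,
      r < ‖x n‖ ∧ ‖‖x n‖⁻¹ • x n - w‖ < ε := by
  set dir : ℕ → X := fun n => ‖x n‖⁻¹ • x n
  set l : Filter ℕ := comap (fun n => ‖x n‖) atTop ⊓ 𝓟 (dir ⁻¹' S)
  have hfreq : ∃ᶠ n in l, dir n ∈ Metric.sphere (0 : X) 1 := by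
    rw [frequently_inf_principal, frequently_comap, frequently_atTop]
    intro C
    obtain ⟨n, hCn, hnS⟩ := h (max C 0)
    have hpos : 0 < ‖x n‖ := (le_max_right C 0).trans_lt hCn
    refine ⟨‖x n‖, (le_max_left C 0).trans hCn.le, n, rfl, hnS, ?_⟩
    simp [dir, norm_smul, hpos.ne']
  obtain ⟨w, hw1, hw⟩ := (isCompact_sphere (0 : X) 1).exists_mapClusterPt_of_frequently hfreq
  refine ⟨w, ?_, by simpa using hw1, fun ε hε r _ => ?_⟩
  · exact mem_closure_iff_clusterPt.mpr <|
      ClusterPt.mono hw (tendsto_principal.mpr (mem_inf_of_right (mem_principal_self _)))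
  · have hnear : ∃ᶠ n in l, dir n ∈ Metric.ball w ε :=
      mapClusterPt_iff_frequently.mp hw _ (Metric.ball_mem_nhds w hε)
    have hlarge : ∀ᶠ n in l, r < ‖x n‖ :=
      mem_inf_of_left (tendsto_comap.eventually (eventually_gt_atTop r))
    obtain ⟨n, hn, hrn⟩ := (hnear.and_eventually hlarge).exists
    exact ⟨n, hrn, by simpa [dist_eq_norm] using hn⟩

end AsymptoticDirection

theorem devIn_eq_inner_devProj {d : ℕ} (F : E d ≃ₜ E d) {V : Submodule ℝ (E d)} (ρ : E d)
    {v : E d} (hv : v ∈ V) (n : ℕ) (z : E d) :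
    devIn F ρ v n z = ⟪devProj F V ρ n z, v⟫ := by
  rw [devProj, ← Submodule.starProjection_apply, Submodule.inner_starProjection_left_eq_right,
    Submodule.starProjection_eq_self_iff.mpr hv]
  rfl

theorem inv_norm_smul_mem_Splus {d : ℕ} {v x : E d} (h : 0 < ⟪x, v⟫) : ‖x‖⁻¹ • x ∈ Splus v := by
  have hx : x ≠ 0 := by rintro rfl; simp at h
  refine ⟨by simp [norm_smul, hx], ?_⟩
  rw [real_inner_smul_right, real_inner_comm]
  exact mul_pos (inv_pos.mpr (norm_pos_iff.mpr hx)) h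

theorem asympDirs_nonempty_of_unbounded_general {d : ℕ}
    (F : E d ≃ₜ E d) (V : Submodule ℝ (E d)) (v₀ : E d)
    (z : E d) :
    ((∀ C : ℝ, ∃ n : ℕ, C < ‖devProj F V v₀ n z‖) → (asympDirs F V v₀ z).Nonempty) ∧
    (∀ v : E d, v ∈ V → ‖v‖ = 1 → (∀ C : ℝ, ∃ n : ℕ, C < devIn F v₀ v n z) →
      (closure (Splus v) ∩ asympDirs F V v₀ z).Nonempty) := by
  set D : ℕ → E d := fun n => devProj F V v₀ n z
  refine ⟨fun h => ?_, fun v hvV hv1 h => ?_⟩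
  · obtain ⟨w, -, hw⟩ := exists_mem_closure_asymptotic_direction D univ fun C =>
      (h C).imp fun _ hn => ⟨hn, trivial⟩
    exact ⟨w, hw⟩
  · obtain ⟨w, hwS, hw⟩ := exists_mem_closure_asymptotic_direction D (Splus v) fun C => by
      obtain ⟨n, hn⟩ := h (max C 0)
      rw [devIn_eq_inner_devProj F v₀ hvV] at hn
      have hle : ⟪D n, v⟫ ≤ ‖D n‖ := by simpa [hv1] using real_inner_le_norm (D n) v
      exact ⟨n, (le_max_left C 0).trans_lt (hn.trans_le hle),
        inv_norm_smul_mem_Splus ((le_max_right C 0).trans_lt hn)⟩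
    exact ⟨w, hwS, hw⟩

/-- **Lemma (asymptotic directions, (b) and (c)).** If `ρ_K(F) ⊆ v₀ + V^⊥` with `v₀ ∈ V`
and `z ∈ K`, then: (b) if `sup_{n∈ℕ} ‖D_V(n,z)‖ = ∞` then `𝒜_V(z) ≠ ∅`; (c) if
`sup_{n∈ℕ} D_v(n,z) = ∞` for some unit vector `v ∈ V`, then
`closure (S^+(v)) ∩ 𝒜_V(z) ≠ ∅`. -/
theorem asympDirs_nonempty_of_unbounded {d : ℕ} (f : Torus d → Torus d)
    (F : E d ≃ₜ E d) (hlift : IsLiftOf F f) (K : Set (Torus d)) (hKc : IsCompact K)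
    (hKinv : f '' K = K) (V : Submodule ℝ (E d)) (v₀ : E d) (hv₀ : v₀ ∈ V)
    (hrot : ∀ ρ' ∈ rotSetOn F K, ρ' - v₀ ∈ Vᗮ)
    (z : E d) (hz : Tproj d z ∈ K) :
    ((∀ C : ℝ, ∃ n : ℕ, C < ‖devProj F V v₀ n z‖) → (asympDirs F V v₀ z).Nonempty) ∧
    (∀ v : E d, v ∈ V → ‖v‖ = 1 → (∀ C : ℝ, ∃ n : ℕ, C < devIn F v₀ v n z) →
      (closure (Splus v) ∩ asympDirs F V v₀ z).Nonempty) :=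
  asympDirs_nonempty_of_unbounded_general F V v₀ z

end
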